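/- arXiv:2407.13516 — 2 statements merged into one kernel-verified Lean document; each statement's English description precedes it below -/
import Mathlib

section
/- For the 1-qubit phase damping channel N_PD with parameter 0 ≤ r ≤ 1, the worst-case trace distance max over pure states ψ of (1/2)tr|N_PD(ψ) − ψ| equals (1 − √(1−r))/2; equivalently, for a pure state with |a|² = x the eigenvalues of N_PD(ψ) − ψ are ±√((1−√(1−r))² x(1−x)). -/
open Matrix Kronecker ComplexOrder

noncomputable def lamMax {n : Type*} [Fintype n] (A : Matrix n n ℂ) : ℝ :=
  ⨆ v : {v : n → ℂ // star v ⬝ᵥ v = 1}, (star v.1 ⬝ᵥ A.mulVec v.1).re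

noncomputable def lamMin {n : Type*} [Fintype n] (A : Matrix n n ℂ) : ℝ :=
  ⨅ v : {v : n → ℂ // star v ⬝ᵥ v = 1}, (star v.1 ⬝ᵥ A.mulVec v.1).re

noncomputable def pureState {n : Type*} (v : n → ℂ) : Matrix n n ℂ :=
  Matrix.vecMulVec v (star v)

noncomputable def chanApp {ι n : Type*} [Fintype ι] [Fintype n] (E : ι → Matrix n n ℂ)
    (ρ : Matrix n n ℂ) : Matrix n n ℂ := ∑ k, E k * ρ * (E k)ᴴ

noncomputable def adjApp {ι n : Type*} [Fintype ι] [Fintype n] (E : ι → Matrix n n ℂ)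
    (M : Matrix n n ℂ) : Matrix n n ℂ := ∑ k, (E k)ᴴ * M * E k

noncomputable def traceDist {n : Type*} [Fintype n] [DecidableEq n] (A B : Matrix n n ℂ) : ℝ :=
  (((Matrix.posSemidef_conjTranspose_mul_self (A - B)).1.eigenvectorUnitary.1 *
      diagonal (((↑) : ℝ → ℂ) ∘ (√·) ∘ (Matrix.posSemidef_conjTranspose_mul_self (A - B)).1.eigenvalues) *
      (star (Matrix.posSemidef_conjTranspose_mul_self (A - B)).1.eigenvectorUnitary :
        Matrix n n ℂ)).trace).re / 2

noncomputable def depol {n : Type*} [Fintype n] [DecidableEq n] (D : ℕ) (p : ℝ)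
    (ρ : Matrix n n ℂ) : Matrix n n ℂ :=
  (p : ℂ) • ρ + (((1 - p) / D : ℝ) : ℂ) • 1

noncomputable def qldpOf {n : Type*} [Fintype n] (N : Matrix n n ℂ → Matrix n n ℂ) : ℝ :=
  ⨆ v : {v : n → ℂ // star v ⬝ᵥ v = 1},
    Real.log (lamMax (N (pureState v.1)) / lamMin (N (pureState v.1)))

/-! ### Auxiliary lemmas -/

lemma pd_unit_normSq {w : Fin 2 → ℂ} (hw : star w ⬝ᵥ w = 1) :
    Complex.normSq (w 0) + Complex.normSq (w 1) = 1 := by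
  have := congrArg Complex.re hw
  simp only [dotProduct, Fin.sum_univ_two, Pi.star_apply, RCLike.star_def,
    Complex.add_re, Complex.mul_re, Complex.conj_re, Complex.conj_im, Complex.one_re] at this
  simp [Complex.normSq_apply]
  linarith

lemma pd_chan_eq {r : ℝ} (hr0 : 0 ≤ r) (hr1 : r ≤ 1) (v : Fin 2 → ℂ) :
    chanApp ![!![1, 0; 0, (Real.sqrt (1 - r) : ℂ)], !![0, 0; 0, (Real.sqrt r : ℂ)]]
      (pureState v) - pureState v =
    !![0, ((Real.sqrt (1-r) : ℂ) - 1) * (v 0 * (starRingEnd ℂ) (v 1));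
       (starRingEnd ℂ) (((Real.sqrt (1-r) : ℂ) - 1) * (v 0 * (starRingEnd ℂ) (v 1))), 0] := by
  have h1 : (Real.sqrt (1-r) : ℂ) * Real.sqrt (1-r) + (Real.sqrt r : ℂ) * Real.sqrt r = 1 := by
    norm_cast
    rw [Real.mul_self_sqrt (by linarith : (0:ℝ) ≤ 1 - r), Real.mul_self_sqrt hr0]; ring
  have hconj : (starRingEnd ℂ) (((Real.sqrt (1-r) : ℂ) - 1) * (v 0 * (starRingEnd ℂ) (v 1)))
      = ((Real.sqrt (1-r) : ℂ) - 1) * ((starRingEnd ℂ) (v 0) * v 1) := by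
    simp [map_sub, Complex.conj_ofReal]
  rw [hconj]
  ext i j
  fin_cases i <;> fin_cases j <;>
    simp [chanApp, pureState, Fin.sum_univ_two, Matrix.mul_apply, vecMulVec_apply,
      Matrix.vecMul, dotProduct, Matrix.conjTranspose_apply] <;>
    first
      | linear_combination (v 1 * (starRingEnd ℂ) (v 1)) * h1
      | ring

lemma pd_rayleigh_val (z : ℂ) (w : Fin 2 → ℂ) :
    (star w ⬝ᵥ (!![0, z; (starRingEnd ℂ) z, 0]).mulVec w).re
      = 2 * (z * (starRingEnd ℂ) (w 0) * w 1).re := by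
  simp [dotProduct, Matrix.mulVec, Fin.sum_univ_two, Complex.add_re, Complex.mul_re,
    Complex.conj_re, Complex.conj_im]
  ring

lemma pd_rayleigh_bound (z : ℂ) {w : Fin 2 → ℂ} (hw : star w ⬝ᵥ w = 1) :
    |(star w ⬝ᵥ (!![0, z; (starRingEnd ℂ) z, 0]).mulVec w).re| ≤ ‖z‖ := by
  rw [pd_rayleigh_val]
  have h1 : |(z * (starRingEnd ℂ) (w 0) * w 1).re| ≤
      ‖z‖ * ‖w 0‖ * ‖w 1‖ := by
    calc |(z * (starRingEnd ℂ) (w 0) * w 1).re| ≤ ‖z * (starRingEnd ℂ) (w 0) * w 1‖ :=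
          Complex.abs_re_le_norm _
      _ = ‖z‖ * ‖w 0‖ * ‖w 1‖ := by
          simp [_root_.map_mul]
  have h2 : ‖w 0‖ ^ 2 + ‖w 1‖ ^ 2 = 1 := by
    rw [Complex.sq_norm, Complex.sq_norm]; exact pd_unit_normSq hw
  have h3 : 2 * (‖z‖ * ‖w 0‖ * ‖w 1‖) ≤ ‖z‖ := by
    nlinarith [sq_nonneg (‖w 0‖ - ‖w 1‖), norm_nonneg z,
      norm_nonneg (w 0), norm_nonneg (w 1)]
  rw [abs_mul, abs_two]
  calc 2 * |(z * (starRingEnd ℂ) (w 0) * w 1).re|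
      ≤ 2 * (‖z‖ * ‖w 0‖ * ‖w 1‖) := by linarith [h1]
    _ ≤ ‖z‖ := h3

instance : Nonempty {v : Fin 2 → ℂ // star v ⬝ᵥ v = 1} :=
  ⟨⟨![1, 0], by simp [dotProduct, Fin.sum_univ_two]⟩⟩

lemma pd_rayleigh_attain (z : ℂ) (ε : ℝ) (hε : ε = 1 ∨ ε = -1) :
    ∃ w : Fin 2 → ℂ, star w ⬝ᵥ w = 1 ∧
      (star w ⬝ᵥ (!![0, z; (starRingEnd ℂ) z, 0]).mulVec w).re = ε * ‖z‖ := by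
  rcases eq_or_ne z 0 with hz | hz
  · exact ⟨![1, 0], by simp [dotProduct, Fin.sum_univ_two],
      by simp [pd_rayleigh_val, hz]⟩
  · have habs : (‖z‖ : ℝ) ≠ 0 := norm_ne_zero_iff.mpr hz
    refine ⟨![(Real.sqrt 2)⁻¹, (ε : ℂ) * (starRingEnd ℂ) z / (‖z‖ * Real.sqrt 2)],
      ?_, ?_⟩
    · have h2 : ((Real.sqrt 2 : ℝ) : ℂ) * ((Real.sqrt 2 : ℝ) : ℂ) = 2 := by
        norm_cast; rw [Real.mul_self_sqrt]; norm_num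
      have hε2 : (ε : ℂ) * ε = 1 := by rcases hε with h | h <;> simp [h]
      have hzz : z * ((starRingEnd ℂ) z)
          = ((‖z‖ : ℝ) : ℂ) * ‖z‖ := by
        rw [Complex.mul_conj]
        norm_cast
        rw [← Complex.sq_norm]; ring
      simp only [dotProduct, Fin.sum_univ_two, Pi.star_apply, Matrix.cons_val_zero,
        Matrix.cons_val_one, Matrix.head_cons, RCLike.star_def, _root_.map_mul, map_div₀, map_inv₀,
        Complex.conj_ofReal, Complex.conj_conj]
      field_simp
      linear_combination
        (-((‖z‖ : ℂ) * (‖z‖ : ℂ))) * h2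
        + ((‖z‖ : ℂ) * (‖z‖ : ℂ)) * hε2 + ((ε : ℂ) * (ε : ℂ)) * hzz
    · rw [pd_rayleigh_val]
      simp only [Matrix.cons_val_zero, Matrix.cons_val_one, Matrix.head_cons]
      have hzz : z * ((starRingEnd ℂ) z)
          = ((‖z‖ : ℝ) : ℂ) * ‖z‖ := by
        rw [Complex.mul_conj]
        norm_cast
        rw [← Complex.sq_norm]; ring
      have h2 : ((Real.sqrt 2 : ℝ) : ℂ) * ((Real.sqrt 2 : ℝ) : ℂ) = 2 := by
        norm_cast; rw [Real.mul_self_sqrt]; norm_num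
      have hs2 : ((Real.sqrt 2 : ℝ) : ℂ) ≠ 0 := by
        norm_cast; positivity
      have key : z * (starRingEnd ℂ) ((((Real.sqrt 2 : ℝ) : ℂ))⁻¹)
          * ((ε : ℂ) * (starRingEnd ℂ) z / ((‖z‖ : ℂ) * (Real.sqrt 2 : ℝ)))
          = ((ε * ‖z‖ / 2 : ℝ) : ℂ) := by
        rw [map_inv₀, Complex.conj_ofReal]
        push_cast
        field_simp
        linear_combination ((ε:ℂ) * ((Real.sqrt 2 : ℝ):ℂ) * ((Real.sqrt 2 : ℝ):ℂ)) * hzz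
          + ((ε:ℂ) * ((‖z‖ : ℝ):ℂ) * ((‖z‖ : ℝ):ℂ)) * h2
          - ((ε:ℂ) * (z * (starRingEnd ℂ) z + ((‖z‖ : ℝ):ℂ) * ((‖z‖ : ℝ):ℂ))) * h2
      rw [key, Complex.ofReal_re]
      ring

lemma pd_bddAbove (z : ℂ) : BddAbove (Set.range fun v : {v : Fin 2 → ℂ // star v ⬝ᵥ v = 1} =>
    (star v.1 ⬝ᵥ (!![0, z; (starRingEnd ℂ) z, 0]).mulVec v.1).re) := by
  refine ⟨‖z‖, ?_⟩
  rintro x ⟨w, rfl⟩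
  exact (abs_le.mp (pd_rayleigh_bound z w.2)).2

lemma pd_bddBelow (z : ℂ) : BddBelow (Set.range fun v : {v : Fin 2 → ℂ // star v ⬝ᵥ v = 1} =>
    (star v.1 ⬝ᵥ (!![0, z; (starRingEnd ℂ) z, 0]).mulVec v.1).re) := by
  refine ⟨-‖z‖, ?_⟩
  rintro x ⟨w, rfl⟩
  exact (abs_le.mp (pd_rayleigh_bound z w.2)).1

lemma pd_lamMax (z : ℂ) : lamMax !![0, z; (starRingEnd ℂ) z, 0] = ‖z‖ := by
  apply le_antisymm
  · exact ciSup_le fun w => (abs_le.mp (pd_rayleigh_bound z w.2)).2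
  · obtain ⟨w, hw, hval⟩ := pd_rayleigh_attain z 1 (Or.inl rfl)
    have := le_ciSup (pd_bddAbove z) (⟨w, hw⟩ : {v : Fin 2 → ℂ // star v ⬝ᵥ v = 1})
    rw [hval, one_mul] at this
    exact this

lemma pd_lamMin (z : ℂ) : lamMin !![0, z; (starRingEnd ℂ) z, 0] = -‖z‖ := by
  apply le_antisymm
  · obtain ⟨w, hw, hval⟩ := pd_rayleigh_attain z (-1) (Or.inr rfl)
    have := ciInf_le (pd_bddBelow z) (⟨w, hw⟩ : {v : Fin 2 → ℂ // star v ⬝ᵥ v = 1})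
    rw [hval] at this
    rw [lamMin]
    linarith
  · exact le_ciInf fun w => (abs_le.mp (pd_rayleigh_bound z w.2)).1

lemma pd_traceDist (A B : Matrix (Fin 2) (Fin 2) ℂ) (z : ℂ)
    (h : A - B = !![0, z; (starRingEnd ℂ) z, 0]) :
    traceDist A B = ‖z‖ := by
  have hsq : (A - B)ᴴ * (A - B) = Matrix.diagonal (fun _ : Fin 2 => ((‖z‖ ^ 2 : ℝ) : ℂ)) := by
    rw [h]
    have hzz : (starRingEnd ℂ) z * z = ((‖z‖ ^ 2 : ℝ) : ℂ) := by
      rw [mul_comm, Complex.mul_conj, Complex.sq_norm]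
    have hzz' : z * (starRingEnd ℂ) z = ((‖z‖ ^ 2 : ℝ) : ℂ) := by
      rw [Complex.mul_conj, Complex.sq_norm]
    ext i j
    fin_cases i <;> fin_cases j <;>
      simp [Matrix.mul_apply, Fin.sum_univ_two, Matrix.conjTranspose_apply, hzz, hzz']
  have hmv : ∀ u : Fin 2 → ℂ, ((A - B)ᴴ * (A - B)) *ᵥ u = ((‖z‖ ^ 2 : ℝ) : ℂ) • u := by
    intro u
    rw [hsq]
    ext i
    simp [Matrix.mulVec_diagonal]
  set hH := (Matrix.posSemidef_conjTranspose_mul_self (A - B)).1 with hHdef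
  have hev : ∀ i, hH.eigenvalues i = ‖z‖ ^ 2 := by
    intro i
    rw [hH.eigenvalues_eq, hmv, dotProduct_smul]
    have hn : star (WithLp.ofLp (hH.eigenvectorBasis i)) ⬝ᵥ WithLp.ofLp (hH.eigenvectorBasis i)
        = 1 := by
      rw [dotProduct_comm, ← EuclideanSpace.inner_eq_star_dotProduct,
        inner_self_eq_norm_sq_to_K, hH.eigenvectorBasis.orthonormal.1 i]
      simp
    rw [hn]
    simp
    rw [← Complex.ofReal_pow, Complex.ofReal_re]
  rw [traceDist, Matrix.trace_mul_cycle, Matrix.UnitaryGroup.star_mul_self, Matrix.one_mul,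
    Matrix.trace_diagonal]
  simp only [Function.comp_apply, hev, Fin.sum_univ_two]
  rw [Real.sqrt_sq (norm_nonneg z)]
  simp

theorem stmt13 {r : ℝ} (hr0 : 0 ≤ r) (hr1 : r ≤ 1) :
    (⨆ v : {v : Fin 2 → ℂ // star v ⬝ᵥ v = 1},
        traceDist (chanApp
            ![!![1, 0; 0, (Real.sqrt (1 - r) : ℂ)], !![0, 0; 0, (Real.sqrt r : ℂ)]]
            (pureState v.1)) (pureState v.1)) =
      (1 - Real.sqrt (1 - r)) / 2 ∧
    (∀ v : Fin 2 → ℂ, star v ⬝ᵥ v = 1 →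
      lamMax (chanApp
          ![!![1, 0; 0, (Real.sqrt (1 - r) : ℂ)], !![0, 0; 0, (Real.sqrt r : ℂ)]]
          (pureState v) - pureState v) =
        Real.sqrt ((1 - Real.sqrt (1 - r)) ^ 2 *
          (Complex.normSq (v 0) * (1 - Complex.normSq (v 0)))) ∧
      lamMin (chanApp
          ![!![1, 0; 0, (Real.sqrt (1 - r) : ℂ)], !![0, 0; 0, (Real.sqrt r : ℂ)]]
          (pureState v) - pureState v) =
        -Real.sqrt ((1 - Real.sqrt (1 - r)) ^ 2 *
          (Complex.normSq (v 0) * (1 - Complex.normSq (v 0))))) := by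
  set c := Real.sqrt (1 - r) with hc
  have hc0 : 0 ≤ c := Real.sqrt_nonneg _
  have hc1 : c ≤ 1 := Real.sqrt_le_one.mpr (by linarith)
  -- abbreviation for z
  set z : (Fin 2 → ℂ) → ℂ := fun v => ((c : ℂ) - 1) * (v 0 * (starRingEnd ℂ) (v 1)) with hz
  have habs : ∀ v : Fin 2 → ℂ, ‖z v‖
      = (1 - c) * (‖v 0‖ * ‖v 1‖) := by
    intro v
    have : ((c : ℂ) - 1) = (((c - 1 : ℝ)) : ℂ) := by push_cast; ring
    rw [hz]
    simp only [this, _root_.map_mul, norm_mul, Complex.norm_real, Complex.norm_conj, Real.norm_eq_abs]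
    rw [abs_of_nonpos (by linarith)]
    ring
  have hRHS : ∀ v : Fin 2 → ℂ, star v ⬝ᵥ v = 1 →
      Real.sqrt ((1 - c) ^ 2 * (Complex.normSq (v 0) * (1 - Complex.normSq (v 0))))
        = ‖z v‖ := by
    intro v hv
    have h1 : 1 - Complex.normSq (v 0) = Complex.normSq (v 1) := by
      have := pd_unit_normSq hv; linarith
    rw [h1, habs v, Real.sqrt_mul (sq_nonneg _), Real.sqrt_sq (by linarith),
      Real.sqrt_mul (Complex.normSq_nonneg _), Complex.norm_def, Complex.norm_def]
  refine ⟨?_, ?_⟩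
  · -- supremum of trace distance
    have htd : ∀ v : {v : Fin 2 → ℂ // star v ⬝ᵥ v = 1},
        traceDist (chanApp
            ![!![1, 0; 0, (c : ℂ)], !![0, 0; 0, (Real.sqrt r : ℂ)]]
            (pureState v.1)) (pureState v.1)
          = (1 - c) * (‖v.1 0‖ * ‖v.1 1‖) := by
      intro v
      rw [← habs v.1]
      exact pd_traceDist _ _ _ (by
        have h := pd_chan_eq hr0 hr1 v.1
        rw [← hc] at h
        exact h)
    rw [show (⨆ v : {v : Fin 2 → ℂ // star v ⬝ᵥ v = 1},
        traceDist (chanApp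
            ![!![1, 0; 0, (c : ℂ)], !![0, 0; 0, (Real.sqrt r : ℂ)]]
            (pureState v.1)) (pureState v.1)) =
      ⨆ v : {v : Fin 2 → ℂ // star v ⬝ᵥ v = 1},
        (1 - c) * (‖v.1 0‖ * ‖v.1 1‖) from iSup_congr htd]
    apply le_antisymm
    · refine ciSup_le fun v => ?_
      have h2 : ‖v.1 0‖ ^ 2 + ‖v.1 1‖ ^ 2 = 1 := by
        rw [Complex.sq_norm, Complex.sq_norm]; exact pd_unit_normSq v.2
      nlinarith [sq_nonneg (‖v.1 0‖ - ‖v.1 1‖),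
        norm_nonneg (v.1 0), norm_nonneg (v.1 1)]
    · have hunit : star ![((Real.sqrt 2 : ℝ) : ℂ)⁻¹, ((Real.sqrt 2 : ℝ) : ℂ)⁻¹]
          ⬝ᵥ ![((Real.sqrt 2 : ℝ) : ℂ)⁻¹, ((Real.sqrt 2 : ℝ) : ℂ)⁻¹] = 1 := by
        have h2 : ((Real.sqrt 2 : ℝ) : ℂ) * ((Real.sqrt 2 : ℝ) : ℂ) = 2 := by
          norm_cast; rw [Real.mul_self_sqrt]; norm_num
        have hs2 : ((Real.sqrt 2 : ℝ) : ℂ) ≠ 0 := by norm_cast; positivity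
        simp [dotProduct, Fin.sum_univ_two, map_inv₀, Complex.conj_ofReal]
        field_simp
        linear_combination (-1 : ℂ) * h2
      have hb : BddAbove (Set.range fun v : {v : Fin 2 → ℂ // star v ⬝ᵥ v = 1} =>
          (1 - c) * (‖v.1 0‖ * ‖v.1 1‖)) := by
        refine ⟨(1 - c) / 2, ?_⟩
        rintro x ⟨v, rfl⟩
        have h2 : ‖v.1 0‖ ^ 2 + ‖v.1 1‖ ^ 2 = 1 := by
          rw [Complex.sq_norm, Complex.sq_norm]; exact pd_unit_normSq v.2
        nlinarith [sq_nonneg (‖v.1 0‖ - ‖v.1 1‖),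
          norm_nonneg (v.1 0), norm_nonneg (v.1 1)]
      have := le_ciSup hb (⟨_, hunit⟩ : {v : Fin 2 → ℂ // star v ⬝ᵥ v = 1})
      have hval : (1 - c) * (|Real.sqrt 2|⁻¹ * |Real.sqrt 2|⁻¹) = (1 - c) / 2 := by
        rw [abs_of_nonneg (Real.sqrt_nonneg _), ← mul_inv,
          Real.mul_self_sqrt (by norm_num : (0:ℝ) ≤ 2)]
        ring
      simpa [hval] using this
  · -- eigenvalue formulas
    intro v hv
    have hM : chanApp ![!![1, 0; 0, (c : ℂ)], !![0, 0; 0, (Real.sqrt r : ℂ)]]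
        (pureState v) - pureState v = !![0, z v; (starRingEnd ℂ) (z v), 0] := by
      have h := pd_chan_eq hr0 hr1 v
      rw [← hc] at h
      exact h
    rw [hM, pd_lamMax, pd_lamMin, hRHS v hv]
    exact ⟨rfl, rfl⟩
end

section
/- For any unital quantum channel N on a 2ⁿ-dimensional Hilbert space with finite optimal QLDP value ε = ε*(N), the fidelity utility satisfies F(N) = min over pure states ψ of ⟨ψ|N(ψ)|ψ⟩ ≤ e^ε/(e^ε + 2ⁿ − 1). -/
open Matrix Kronecker ComplexOrder

/-! ### Auxiliary definitions and lemmas -/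

noncomputable def Gfun {ι n : Type*} [Fintype ι] [Fintype n] (E : ι → Matrix n n ℂ)
    (v u : n → ℂ) : ℝ := ∑ k, Complex.normSq (star v ⬝ᵥ (E k).mulVec u)

section Aux

variable {ι m : Type*} [Fintype ι] [Fintype m]

lemma sum_mulVec' (A : ι → Matrix m m ℂ) (u : m → ℂ) :
    (∑ k, A k) *ᵥ u = ∑ k, (A k) *ᵥ u := by
  ext i
  simp only [mulVec, dotProduct, Finset.sum_apply, Matrix.sum_apply, Finset.sum_mul]
  rw [Finset.sum_comm]

lemma dot_sum' (x : m → ℂ) (w : ι → m → ℂ) : x ⬝ᵥ (∑ k, w k) = ∑ k, x ⬝ᵥ w k := by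
  simp only [dotProduct, Finset.sum_apply, Finset.mul_sum]
  rw [Finset.sum_comm]

lemma vecMulVec_mulVec' (a b x : m → ℂ) : (vecMulVec a b) *ᵥ x = (b ⬝ᵥ x) • a := by
  funext i
  simp only [mulVec, dotProduct, vecMulVec_apply, Pi.smul_apply, smul_eq_mul, Finset.sum_mul]
  exact Finset.sum_congr rfl fun j _ => by ring

lemma star_dot_conjT (A : Matrix m m ℂ) (u v : m → ℂ) :
    star u ⬝ᵥ Aᴴ.mulVec v = (starRingEnd ℂ) (star v ⬝ᵥ A.mulVec u) := by
  simp only [dotProduct, mulVec, conjTranspose_apply, Finset.mul_sum, map_sum]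
  rw [Finset.sum_comm]
  refine Finset.sum_congr rfl fun i _ => Finset.sum_congr rfl fun j _ => ?_
  simp only [Pi.star_apply, Complex.star_def, _root_.map_mul, Complex.conj_conj]
  ring

lemma adj_rayleigh (E : ι → Matrix m m ℂ) (v u : m → ℂ) :
    star u ⬝ᵥ (adjApp E (pureState v)).mulVec u = ((Gfun E v u : ℝ) : ℂ) := by
  simp only [adjApp, Gfun, Complex.ofReal_sum]
  rw [sum_mulVec', dot_sum']
  refine Finset.sum_congr rfl fun k _ => ?_
  rw [Matrix.mul_assoc, ← mulVec_mulVec, ← mulVec_mulVec, pureState, vecMulVec_mulVec',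
    mulVec_smul, dotProduct_smul, star_dot_conjT, smul_eq_mul]
  first
    | rw [← Complex.normSq_eq_conj_mul_self]
    | rw [Complex.mul_conj]
    | rw [mul_comm, ← Complex.normSq_eq_conj_mul_self]
    | rw [mul_comm, Complex.mul_conj]

lemma chan_diag (E : ι → Matrix m m ℂ) (v : m → ℂ) :
    star v ⬝ᵥ (chanApp E (pureState v)).mulVec v = ((Gfun E v v : ℝ) : ℂ) := by
  simp only [chanApp, Gfun, Complex.ofReal_sum]
  rw [sum_mulVec', dot_sum']
  refine Finset.sum_congr rfl fun k _ => ?_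
  rw [Matrix.mul_assoc, ← mulVec_mulVec, ← mulVec_mulVec, pureState, vecMulVec_mulVec',
    mulVec_smul, dotProduct_smul, star_dot_conjT, smul_eq_mul]
  first
    | rw [← Complex.normSq_eq_conj_mul_self]
    | rw [Complex.mul_conj]
    | rw [mul_comm, ← Complex.normSq_eq_conj_mul_self]
    | rw [mul_comm, Complex.mul_conj]

lemma adj_ray_re (E : ι → Matrix m m ℂ) (v u : m → ℂ) :
    (star u ⬝ᵥ (adjApp E (pureState v)).mulVec u).re = Gfun E v u := by
  rw [adj_rayleigh]; exact Complex.ofReal_re _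

lemma chan_diag_re (E : ι → Matrix m m ℂ) (v : m → ℂ) :
    (star v ⬝ᵥ (chanApp E (pureState v)).mulVec v).re = Gfun E v v := by
  rw [chan_diag]; exact Complex.ofReal_re _

lemma G_nonneg (E : ι → Matrix m m ℂ) (v u : m → ℂ) : 0 ≤ Gfun E v u :=
  Finset.sum_nonneg fun _ _ => Complex.normSq_nonneg _

lemma G_cont (E : ι → Matrix m m ℂ) :
    Continuous (fun p : (m → ℂ) × (m → ℂ) => Gfun E p.1 p.2) := by
  apply continuous_finset_sum
  intro k _
  apply Complex.continuous_normSq.comp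
  apply continuous_finset_sum
  intro i _
  apply Continuous.mul
  · exact Complex.continuous_conj.comp ((continuous_apply i).comp continuous_fst)
  · apply continuous_finset_sum
    intro j _
    exact continuous_const.mul ((continuous_apply j).comp continuous_snd)

lemma norm_dot_eq (v : m → ℂ) : star v ⬝ᵥ v = ((∑ i, Complex.normSq (v i) : ℝ) : ℂ) := by
  simp only [dotProduct, Pi.star_apply, Complex.star_def, Complex.ofReal_sum]
  exact Finset.sum_congr rfl fun i _ => (Complex.normSq_eq_conj_mul_self).symm

lemma sphere_compact : IsCompact {v : m → ℂ | star v ⬝ᵥ v = 1} := by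
  apply Metric.isCompact_of_isClosed_isBounded
  · have : Continuous fun v : m → ℂ => star v ⬝ᵥ v := by
      apply continuous_finset_sum
      intro i _
      exact (Complex.continuous_conj.comp (continuous_apply i)).mul (continuous_apply i)
    exact (isClosed_singleton (x := (1:ℂ))).preimage this
  · apply Bornology.IsBounded.subset (Metric.isBounded_closedBall (x := (0 : m → ℂ)) (r := 1))
    intro v hv
    simp only [Set.mem_setOf_eq] at hv
    rw [Metric.mem_closedBall, dist_zero_right]
    have hre : ∑ i, Complex.normSq (v i) = 1 := by
      rw [norm_dot_eq] at hv
      exact_mod_cast hv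
    rw [pi_norm_le_iff_of_nonneg (by norm_num : (0:ℝ) ≤ 1)]
    intro i
    have hle : Complex.normSq (v i) ≤ 1 := by
      rw [← hre]
      exact Finset.single_le_sum (fun j _ => Complex.normSq_nonneg _) (Finset.mem_univ i)
    have : ‖v i‖ ≤ 1 := by
      rw [Complex.norm_def]
      exact Real.sqrt_le_one.mpr hle
    simpa using this

end Aux

lemma exists_onb {d : ℕ} [NeZero d] (u : Fin d → ℂ) (hu : star u ⬝ᵥ u = 1) :
    ∃ B : Fin d → Fin d → ℂ, B 0 = u ∧ (∀ j, star (B j) ⬝ᵥ B j = 1) ∧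
      ∀ M : Matrix (Fin d) (Fin d) ℂ, ∑ j, star (B j) ⬝ᵥ M.mulVec (B j) = M.trace := by
  classical
  set Euc := EuclideanSpace ℂ (Fin d)
  set u' : Euc := (WithLp.equiv 2 _).symm u with hu'
  have hcard : Module.finrank ℂ Euc = Fintype.card (Fin d) := by
    simp [Euc, finrank_euclideanSpace]
  have horth : Orthonormal ℂ (({0} : Set (Fin d)).restrict (fun _ => u')) := by
    rw [orthonormal_iff_ite]
    rintro ⟨i, hi⟩ ⟨j, hj⟩
    simp only [Set.mem_singleton_iff] at hi hj
    subst hi; subst hj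
    simp only [Set.restrict_apply, if_pos rfl]
    have hiu : (inner ℂ u' u' : ℂ) = star u ⬝ᵥ u := by rw [dotProduct_comm]; rfl
    change inner ℂ u' u' = if True then 1 else 0
    rw [hiu, hu]
    simp
  obtain ⟨b, hb⟩ := horth.exists_orthonormalBasis_extension_of_card_eq hcard
  set B : Fin d → Fin d → ℂ := fun j => (WithLp.equiv 2 _) (b j) with hB
  have hinner : ∀ i j, star (B i) ⬝ᵥ B j = if i = j then 1 else 0 := by
    intro i j
    have hib : star (B i) ⬝ᵥ B j = inner ℂ (b i) (b j) := by rw [dotProduct_comm]; rfl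
    rw [hib]
    exact orthonormal_iff_ite.mp b.orthonormal i j
  refine ⟨B, ?_, fun j => by simp [hinner j j], ?_⟩
  · have : b 0 = u' := hb 0 rfl
    simp [hB, this, hu']
  · intro M
    set U : Matrix (Fin d) (Fin d) ℂ := Matrix.of fun i j => B j i with hU
    have hUU : Uᴴ * U = 1 := by
      ext i j
      simp only [Matrix.mul_apply, conjTranspose_apply, Matrix.one_apply, hU, Matrix.of_apply]
      rw [← hinner i j]
      simp [dotProduct]
    have h2 : U * Uᴴ = 1 := mul_eq_one_comm.mp hUU
    have key : ∀ i k, (∑ j, (starRingEnd ℂ) (B j i) * B j k) = if k = i then 1 else 0 := by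
      intro i k
      have := congrFun (congrFun h2 k) i
      simp only [Matrix.mul_apply, conjTranspose_apply, Matrix.one_apply, hU,
        Matrix.of_apply] at this
      rw [← this]
      exact Finset.sum_congr rfl fun j _ => by simp [Complex.star_def]; ring
    calc ∑ j, star (B j) ⬝ᵥ M.mulVec (B j)
        = ∑ j, ∑ i, ∑ k, (starRingEnd ℂ) (B j i) * (M i k * B j k) := by
          refine Finset.sum_congr rfl fun j _ => ?_
          simp [dotProduct, mulVec, Finset.mul_sum, Complex.star_def]
      _ = ∑ i, ∑ k, M i k * ∑ j, (starRingEnd ℂ) (B j i) * B j k := by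
          rw [Finset.sum_comm]
          refine Finset.sum_congr rfl fun i _ => ?_
          rw [Finset.sum_comm]
          refine Finset.sum_congr rfl fun k _ => ?_
          rw [Finset.mul_sum]
          exact Finset.sum_congr rfl fun j _ => by ring
      _ = ∑ i, M i i := by
          refine Finset.sum_congr rfl fun i _ => ?_
          simp [key, Finset.sum_ite_eq, Finset.mem_univ]
      _ = M.trace := rfl

lemma trace_adj {d K : ℕ} (E : Fin K → Matrix (Fin d) (Fin d) ℂ)
    (hUnital : ∑ k, E k * (E k)ᴴ = 1) (v : Fin d → ℂ) (hv : star v ⬝ᵥ v = 1) :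
    (adjApp E (pureState v)).trace = 1 := by
  have h1 : (adjApp E (pureState v)).trace = ((pureState v) * ∑ k, E k * (E k)ᴴ).trace := by
    rw [adjApp, Matrix.trace_sum, Finset.mul_sum, Matrix.trace_sum]
    refine Finset.sum_congr rfl fun k _ => ?_
    rw [Matrix.trace_mul_cycle, ← Matrix.mul_assoc, Matrix.trace_mul_cycle]
  rw [h1, hUnital, Matrix.mul_one]
  have h2 : (pureState v).trace = v ⬝ᵥ star v := by
    simp [pureState, Matrix.trace, Matrix.diag, vecMulVec_apply, dotProduct]
  rw [h2, dotProduct_comm, hv]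

lemma lamMin_le_G {d K : ℕ} (E : Fin K → Matrix (Fin d) (Fin d) ℂ)
    (v u : Fin d → ℂ) (hu : star u ⬝ᵥ u = 1) :
    lamMin (adjApp E (pureState v)) ≤ Gfun E v u := by
  have hbdd : BddBelow (Set.range fun u : {u : Fin d → ℂ // star u ⬝ᵥ u = 1} =>
      (star u.1 ⬝ᵥ (adjApp E (pureState v)).mulVec u.1).re) := by
    refine ⟨0, ?_⟩
    rintro x ⟨w, rfl⟩
    simp only [adj_ray_re]
    exact G_nonneg E v w.1
  have := ciInf_le hbdd (⟨u, hu⟩ : {u : Fin d → ℂ // star u ⬝ᵥ u = 1})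
  rwa [adj_ray_re] at this

lemma core_ineq {d K : ℕ} [NeZero d] (E : Fin K → Matrix (Fin d) (Fin d) ℂ)
    (hUnital : ∑ k, E k * (E k)ᴴ = 1) (v u : Fin d → ℂ)
    (hv : star v ⬝ᵥ v = 1) (hu : star u ⬝ᵥ u = 1) :
    Gfun E v u + ((d : ℝ) - 1) * lamMin (adjApp E (pureState v)) ≤ 1 := by
  obtain ⟨B, hB0, hBunit, hBsum⟩ := exists_onb u hu
  set M := adjApp E (pureState v) with hM
  have hsum : ∑ j, Gfun E v (B j) = 1 := by
    have h1 : (∑ j, star (B j) ⬝ᵥ M.mulVec (B j)) = 1 := by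
      rw [hBsum M, hM, trace_adj E hUnital v hv]
    rw [Finset.sum_congr rfl (fun j _ => adj_rayleigh E v (B j))] at h1
    rw [← Complex.ofReal_sum] at h1
    exact_mod_cast h1
  have hd : 1 ≤ d := Nat.one_le_iff_ne_zero.mpr (NeZero.ne d)
  have hconst : ((d : ℝ) - 1) * lamMin M =
      ∑ _j ∈ Finset.univ.erase (0 : Fin d), lamMin M := by
    rw [Finset.sum_const, Finset.card_erase_of_mem (Finset.mem_univ _), Finset.card_univ,
      Fintype.card_fin, nsmul_eq_mul, Nat.cast_sub hd, Nat.cast_one]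
  calc Gfun E v u + ((d : ℝ) - 1) * lamMin M
      = Gfun E v (B 0) + ∑ _j ∈ Finset.univ.erase (0 : Fin d), lamMin M := by
        rw [hB0, hconst]
    _ ≤ Gfun E v (B 0) + ∑ j ∈ Finset.univ.erase (0 : Fin d), Gfun E v (B j) := by
        gcongr with j hj
        exact lamMin_le_G E v (B j) (hBunit j)
    _ = ∑ j, Gfun E v (B j) :=
        Finset.add_sum_erase Finset.univ (fun j => Gfun E v (B j)) (Finset.mem_univ (0 : Fin d))
    _ = 1 := hsum

set_option maxHeartbeats 2000000 in
theorem stmt17 {n K : ℕ} (E : Fin K → Matrix (Fin (2 ^ n)) (Fin (2 ^ n)) ℂ)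
    (hTP : ∑ k, (E k)ᴴ * E k = 1) (hUnital : ∑ k, E k * (E k)ᴴ = 1)
    (hfin : ∀ v : Fin (2 ^ n) → ℂ, star v ⬝ᵥ v = 1 →
      0 < lamMin (adjApp E (pureState v)))
    {ε : ℝ}
    (hε : ε = ⨆ v : {v : Fin (2 ^ n) → ℂ // star v ⬝ᵥ v = 1},
      Real.log (lamMax (adjApp E (pureState v.1)) / lamMin (adjApp E (pureState v.1)))) :
    (⨅ v : {v : Fin (2 ^ n) → ℂ // star v ⬝ᵥ v = 1},
        (star v.1 ⬝ᵥ (chanApp E (pureState v.1)).mulVec v.1).re) ≤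
      Real.exp ε / (Real.exp ε + 2 ^ n - 1) := by
  classical
  haveI : NeZero (2 ^ n) := ⟨(pow_pos (by norm_num : 0 < 2) n).ne'⟩
  -- the distinguished unit vector
  set e₀ : Fin (2 ^ n) → ℂ := Pi.single 0 1 with he₀def
  have he₀ : star e₀ ⬝ᵥ e₀ = 1 := by
    rw [norm_dot_eq]
    norm_cast
    simp [he₀def, Pi.single_apply, apply_ite Complex.normSq]
  haveI hne : Nonempty {v : Fin (2 ^ n) → ℂ // star v ⬝ᵥ v = 1} := ⟨⟨e₀, he₀⟩⟩
  -- uniform positive lower bound via compactness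
  set S : Set (Fin (2 ^ n) → ℂ) := {v | star v ⬝ᵥ v = 1} with hS
  have hK : IsCompact (S ×ˢ S) := sphere_compact.prod sphere_compact
  have hKne : (S ×ˢ S).Nonempty := ⟨(e₀, e₀), ⟨he₀, he₀⟩⟩
  obtain ⟨p₀, hp₀, hminOn⟩ := hK.exists_isMinOn hKne (G_cont E).continuousOn
  set c : ℝ := Gfun E p₀.1 p₀.2 with hc_def
  have hc : 0 < c :=
    lt_of_lt_of_le (hfin p₀.1 hp₀.1) (lamMin_le_G E p₀.1 p₀.2 hp₀.2)
  have hcle : ∀ v u : Fin (2 ^ n) → ℂ, star v ⬝ᵥ v = 1 → star u ⬝ᵥ u = 1 → c ≤ Gfun E v u := by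
    intro v u hv hu
    have h := isMinOn_iff.mp hminOn (v, u) (Set.mem_prod.mpr ⟨hv, hu⟩)
    simpa using h
  have hminc : ∀ v : Fin (2 ^ n) → ℂ, star v ⬝ᵥ v = 1 → c ≤ lamMin (adjApp E (pureState v)) := by
    intro v hv
    refine le_ciInf fun u => ?_
    rw [adj_ray_re]
    exact hcle v u.1 hv u.2
  have hGle1 : ∀ v u : Fin (2 ^ n) → ℂ, star v ⬝ᵥ v = 1 → star u ⬝ᵥ u = 1 → Gfun E v u ≤ 1 := by
    intro v u hv hu
    have h1 := core_ineq E hUnital v u hv hu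
    have h2 : 0 ≤ (((2 ^ n : ℕ) : ℝ) - 1) * lamMin (adjApp E (pureState v)) := by
      apply mul_nonneg
      · have : (1:ℝ) ≤ ((2 ^ n : ℕ):ℝ) := by exact_mod_cast Nat.one_le_iff_ne_zero.mpr (NeZero.ne (2 ^ n))
        linarith
      · exact le_trans hc.le (hminc v hv)
    linarith
  have hbddA : ∀ v : Fin (2 ^ n) → ℂ, star v ⬝ᵥ v = 1 →
      BddAbove (Set.range fun u : {u : Fin (2 ^ n) → ℂ // star u ⬝ᵥ u = 1} =>
        (star u.1 ⬝ᵥ (adjApp E (pureState v)).mulVec u.1).re) := by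
    intro v hv
    refine ⟨1, ?_⟩
    rintro x ⟨u, rfl⟩
    simp only [adj_ray_re]
    exact hGle1 v u.1 hv u.2
  have hmaxle1 : ∀ v : Fin (2 ^ n) → ℂ, star v ⬝ᵥ v = 1 →
      lamMax (adjApp E (pureState v)) ≤ 1 := by
    intro v hv
    refine ciSup_le fun u => ?_
    rw [adj_ray_re]
    exact hGle1 v u.1 hv u.2
  have hmaxgec : ∀ v : Fin (2 ^ n) → ℂ, star v ⬝ᵥ v = 1 →
      c ≤ lamMax (adjApp E (pureState v)) := by
    intro v hv
    have h := le_ciSup (hbddA v hv) (⟨v, hv⟩ : {u : Fin (2 ^ n) → ℂ // star u ⬝ᵥ u = 1})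
    rw [adj_ray_re] at h
    exact le_trans (hcle v v hv hv) h
  -- boundedness of the QLDP family
  have hbddε : BddAbove (Set.range fun v : {v : Fin (2 ^ n) → ℂ // star v ⬝ᵥ v = 1} =>
      Real.log (lamMax (adjApp E (pureState v.1)) / lamMin (adjApp E (pureState v.1)))) := by
    refine ⟨Real.log (1 / c), ?_⟩
    rintro x ⟨v, rfl⟩
    simp only []
    have h1 : 0 < lamMax (adjApp E (pureState v.1)) / lamMin (adjApp E (pureState v.1)) :=
      div_pos (lt_of_lt_of_le hc (hmaxgec v.1 v.2)) (lt_of_lt_of_le hc (hminc v.1 v.2))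
    apply Real.log_le_log h1
    exact div_le_div₀ (by positivity) (hmaxle1 v.1 v.2) hc (hminc v.1 v.2)
  -- specialize to e₀
  set M₀ := adjApp E (pureState e₀) with hM₀
  have hminpos : 0 < lamMin M₀ := lt_of_lt_of_le hc (hminc e₀ he₀)
  have hlog : Real.log (lamMax M₀ / lamMin M₀) ≤ ε := by
    rw [hε]
    exact le_ciSup hbddε (⟨e₀, he₀⟩ : {v : Fin (2 ^ n) → ℂ // star v ⬝ᵥ v = 1})
  have hratio : lamMax M₀ / lamMin M₀ ≤ Real.exp ε :=
    (Real.log_le_iff_le_exp (div_pos (lt_of_lt_of_le hc (hmaxgec e₀ he₀)) hminpos)).mp hlog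
  have hXm : lamMax M₀ ≤ Real.exp ε * lamMin M₀ := (div_le_iff₀ hminpos).mp hratio
  have hrX : Gfun E e₀ e₀ ≤ lamMax M₀ := by
    have h := le_ciSup (hbddA e₀ he₀) (⟨e₀, he₀⟩ : {u : Fin (2 ^ n) → ℂ // star u ⬝ᵥ u = 1})
    rwa [adj_ray_re] at h
  have hsum : Gfun E e₀ e₀ + (((2 ^ n : ℕ) : ℝ) - 1) * lamMin M₀ ≤ 1 :=
    core_ineq E hUnital e₀ e₀ he₀ he₀
  -- put everything together
  have hone : (1:ℝ) ≤ (2:ℝ) ^ n := one_le_pow₀ (by norm_num)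
  have hdcast : ((2 ^ n : ℕ) : ℝ) = (2:ℝ) ^ n := by push_cast; ring
  have hden : 0 < Real.exp ε + 2 ^ n - 1 := by
    have := Real.exp_pos ε
    linarith
  refine ciInf_le_of_le ?_ (⟨e₀, he₀⟩ : {v : Fin (2 ^ n) → ℂ // star v ⬝ᵥ v = 1}) ?_
  · refine ⟨0, ?_⟩
    rintro x ⟨u, rfl⟩
    simp only [chan_diag_re]
    exact G_nonneg E u.1 u.1
  · rw [chan_diag_re, le_div_iff₀ hden]
    set r := Gfun E e₀ e₀ with hr
    have hr0 : 0 ≤ r := G_nonneg E e₀ e₀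
    have hrEm : r ≤ Real.exp ε * lamMin M₀ := le_trans hrX hXm
    have hD1 : (0:ℝ) ≤ 2 ^ n - 1 := by linarith
    have hsum' : (2 ^ n - 1 : ℝ) * lamMin M₀ ≤ 1 - r := by
      rw [← hdcast]
      linarith [hsum]
    nlinarith [mul_le_mul_of_nonneg_right hrEm hD1,
      mul_le_mul_of_nonneg_left hsum' (Real.exp_pos ε).le]
end
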